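/- Let MF_n denote the Milnor group of the free group F on generators x_1,...,x_n, i.e., F modulo the normal closure of all [x_i, x_i^y] for y ∈ F. Then MF_n is a finitely presented nilpotent group of class at most n. -/

import Mathlib

/-!
Let `aᵢ` be the image of `xᵢ` in `MFₙ`; each `aᵢ` commutes with all of its conjugates. Killing
one `aᵢ` leaves a group of the same kind on `n - 1` generators, so by induction `γₙ(MFₙ)` lies in
the normal closure of every `aᵢ`. That normal closure is generated by conjugates of `aᵢ`, hence
centralizes `aᵢ`; so `γₙ(MFₙ)` is central and `γₙ₊₁(MFₙ) = 1`.

For the finite presentation, let `R` be the Milnor relators, so `γₙ(F) ≤ R`. The term `γₙ(F)` is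
normally generated by the finitely many `n`-fold commutators of the `xᵢ`, and `R / γₙ(F)` is a
subgroup of the finitely generated nilpotent group `F / γₙ(F)`, hence finitely generated: by
induction on the class, the last nontrivial term of the lower central series is a finitely
generated central subgroup, and an extension of finitely generated groups is finitely generated.
-/

/-- A group is finitely presented if it is isomorphic to the quotient of a finitely
generated free group by the normal closure of a finite set of relators. -/
def IsFinitelyPresented (G : Type*) [Group G] : Prop :=
  ∃ (m : ℕ) (S : Finset (FreeGroup (Fin m))),
    Nonempty (G ≃* FreeGroup (Fin m) ⧸
      Subgroup.normalClosure (S : Set (FreeGroup (Fin m))))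

/-- The subgroup of relators defining the Milnor group. -/
def milnorRelators {G : Type*} [Group G] {n : ℕ} (x : Fin n → G) : Subgroup G :=
  Subgroup.normalClosure
    {g : G | ∃ (i : Fin n) (y : G),
      g = (x i)⁻¹ * (y⁻¹ * x i * y)⁻¹ * x i * (y⁻¹ * x i * y)}

instance {G : Type*} [Group G] {n : ℕ} (x : Fin n → G) : (milnorRelators x).Normal :=
  Subgroup.normalClosure_normal

open Subgroup
open scoped commutatorElement

section

variable {G H : Type*} [Group G] [Group H]

def CommutesWithConjugates (a : G) : Prop :=
  ∀ g : G, Commute a (g⁻¹ * a * g)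

theorem CommutesWithConjugates.map {a : G} (ha : CommutesWithConjugates a) {f : G →* H}
    (hf : Function.Surjective f) : CommutesWithConjugates (f a) := by
  intro g
  obtain ⟨g, rfl⟩ := hf g
  simpa using (ha g).map f

theorem CommutesWithConjugates.normalClosure_le_centralizer {a : G}
    (ha : CommutesWithConjugates a) : normalClosure {a} ≤ centralizer {a} := by
  refine closure_le _ |>.mpr ?_
  intro b hb
  obtain ⟨_, rfl, hab⟩ := Group.mem_conjugatesOfSet_iff.mp hb
  obtain ⟨c, rfl⟩ := isConj_iff.mp hab
  simpa [mem_centralizer_singleton_iff] using (ha c⁻¹).symm.eq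

theorem Subgroup.closure_range_comp_eq_top {ι : Type*} {x : ι → G}
    (hx : closure (Set.range x) = ⊤) {f : G →* H} (hf : Function.Surjective f) :
    closure (Set.range (f ∘ x)) = ⊤ := by
  rw [Set.range_comp, ← MonoidHom.map_closure, hx, map_top_of_surjective f hf]

theorem Subgroup.closure_range_comp_succAbove_eq_top {n : ℕ} {x : Fin (n + 1) → G}
    (hx : closure (Set.range x) = ⊤) {i : Fin (n + 1)} (hi : x i = 1) :
    closure (Set.range (x ∘ i.succAbove)) = ⊤ := by
  rw [eq_top_iff, ← hx, closure_le]
  rintro _ ⟨j, rfl⟩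
  obtain rfl | ⟨k, rfl⟩ := i.eq_self_or_eq_succAbove j
  · rw [hi]; exact one_mem _
  · exact subset_closure ⟨k, rfl⟩

theorem Subgroup.mem_center_of_commute_of_closure_eq_top {S : Set G} (hS : closure S = ⊤)
    {g : G} (hg : ∀ s ∈ S, Commute g s) : g ∈ center G := by
  rw [center_eq_iInf hS]
  simp only [mem_iInf]
  exact fun s hs => mem_centralizer_singleton_iff.mpr (hg s hs).eq

theorem Subgroup.lowerCentralSeries_quotient_eq_bot_iff (N : Subgroup G) [N.Normal] (k : ℕ) :
    (⊤ : Subgroup (G ⧸ N)).lowerCentralSeries k = ⊥ ↔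
      (⊤ : Subgroup G).lowerCentralSeries k ≤ N := by
  rw [← map_top_of_surjective _ (QuotientGroup.mk'_surjective N), ← map_lowerCentralSeries,
    map_eq_bot_iff, QuotientGroup.ker_mk']

theorem lowerCentralSeries_eq_bot_of_commutesWithConjugates :
    ∀ {n : ℕ} {G : Type*} [Group G] (x : Fin n → G), closure (Set.range x) = ⊤ →
      (∀ i, CommutesWithConjugates (x i)) → (⊤ : Subgroup G).lowerCentralSeries n = ⊥
  | 0, G, _, x, hx, _ => by
    rw [Set.range_eq_empty, Subgroup.closure_empty] at hx
    rw [Subgroup.lowerCentralSeries_zero, hx]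
  | n + 1, G, _, x, hx, hc => by
    have hle (i : Fin (n + 1)) : (⊤ : Subgroup G).lowerCentralSeries n ≤ normalClosure {x i} := by
      set q := QuotientGroup.mk' (normalClosure {x i})
      have hq : Function.Surjective q := QuotientGroup.mk'_surjective _
      rw [← lowerCentralSeries_quotient_eq_bot_iff]
      refine lowerCentralSeries_eq_bot_of_commutesWithConjugates (q ∘ x ∘ i.succAbove) ?_
        fun j => (hc _).map hq
      refine closure_range_comp_succAbove_eq_top (x := q ∘ x) (closure_range_comp_eq_top hx hq) ?_
      exact (QuotientGroup.eq_one_iff _).mpr (subset_normalClosure rfl)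
    refine Subgroup.lowerCentralSeries_succ_eq_bot _ fun g hg => ?_
    refine mem_center_of_commute_of_closure_eq_top hx ?_
    rintro _ ⟨i, rfl⟩
    exact ((hc i).normalClosure_le_centralizer (hle i hg) (x i) rfl).symm

theorem Subgroup.commutator_normalClosure_top {S : Set G} (hS : closure S = ⊤) (C : Set G) :
    ⁅normalClosure C, (⊤ : Subgroup G)⁆ = normalClosure (Set.image2 (⁅·, ·⁆) C S) := by
  refine le_antisymm ?_ <| normalClosure_le_normal ?_
  · set q := QuotientGroup.mk' (normalClosure (Set.image2 (⁅·, ·⁆) C S))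
    have hq : Function.Surjective q := QuotientGroup.mk'_surjective _
    rw [← QuotientGroup.ker_mk' (normalClosure (Set.image2 (⁅·, ·⁆) C S)), ← map_eq_bot_iff,
      map_commutator, map_top_of_surjective q hq, commutator_top_right_eq_bot_iff_le_center,
      map_normalClosure _ _ hq]
    refine normalClosure_le_normal ?_
    rintro _ ⟨c, hc, rfl⟩
    refine mem_center_of_commute_of_closure_eq_top (S := q '' S)
      (by rw [← MonoidHom.map_closure, hS, map_top_of_surjective q hq]) ?_
    rintro _ ⟨s, hs, rfl⟩
    rw [← commutatorElement_eq_one_iff_commute, ← map_commutatorElement q]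
    exact (QuotientGroup.eq_one_iff _).mpr (subset_normalClosure ⟨c, hc, s, hs, rfl⟩)
  · rintro _ ⟨c, hc, s, -, rfl⟩
    exact commutator_mem_commutator (subset_normalClosure hc) (mem_top s)

theorem Subgroup.isFinitelyNormallyGenerated_lowerCentralSeries [Group.FG G] (k : ℕ) :
    ((⊤ : Subgroup G).lowerCentralSeries k).IsFinitelyNormallyGenerated := by
  obtain ⟨S, hS, hSfin⟩ := Group.fg_iff.mp ‹Group.FG G›
  induction k with
  | zero => exact ⟨S, hSfin, top_unique (hS ▸ closure_le_normalClosure)⟩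
  | succ k ih =>
    obtain ⟨C, hCfin, hC⟩ := ih
    refine ⟨Set.image2 (⁅·, ·⁆) C S, hCfin.image2 _ hSfin, ?_⟩
    rw [← commutator_normalClosure_top hS, hC, Subgroup.lowerCentralSeries_succ]

theorem CommGroup.fg_subgroup {A : Type*} [CommGroup A] [Group.FG A] (B : Subgroup A) : B.FG := by
  have : Module.Finite ℤ (Additive A) :=
    Module.Finite.iff_addGroup_fg.mpr (GroupFG.iff_add_fg.mp ‹_›)
  have hB := IsNoetherian.noetherian (AddSubgroup.toIntSubmodule B.toAddSubgroup)
  rwa [Subgroup.fg_iff_add_fg, ← AddSubgroup.toIntSubmodule_toAddSubgroup B.toAddSubgroup,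
    ← Submodule.fg_iff_addSubgroup_fg]

open scoped IsMulCommutative in
theorem Subgroup.FG.of_le_of_le_center {A B : Subgroup G} (hA : A.FG) (hAc : A ≤ center G)
    (hBA : B ≤ A) : B.FG := by
  have : IsMulCommutative A := ⟨⟨fun a b => Subtype.ext (mem_center_iff.mp (hAc b.2) a)⟩⟩
  have : Group.FG A := (Group.fg_iff_subgroup_fg A).mpr hA
  obtain ⟨T, hT⟩ := CommGroup.fg_subgroup (B.subgroupOf A)
  rw [← inf_eq_left.mpr hBA, ← subgroupOf_map_subtype, ← hT, MonoidHom.map_closure]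
  exact (fg_iff _).mpr ⟨_, rfl, T.finite_toSet.image _⟩

theorem Subgroup.IsFinitelyNormallyGenerated.fg_of_le_center {N : Subgroup G}
    (hN : N.IsFinitelyNormallyGenerated) (hNc : N ≤ center G) : N.FG := by
  obtain ⟨S, hSfin, rfl⟩ := hN
  have hSc : closure S ≤ center G := closure_le _ |>.mpr (subset_normalClosure.trans hNc)
  have : (closure S).Normal := ⟨fun a ha b => by simpa [mem_center_iff.mp (hSc ha) b]⟩
  rw [le_antisymm (normalClosure_le_normal subset_closure) closure_le_normalClosure]
  exact (fg_iff _).mpr ⟨S, rfl, hSfin⟩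

theorem Subgroup.FG.of_map_of_inf_ker {f : G →* H} {K : Subgroup G} (hmap : (K.map f).FG)
    (hker : (K ⊓ f.ker).FG) : K.FG := by
  obtain ⟨T, hTK, hTfin, hT⟩ : ∃ T ⊆ (K : Set G), T.Finite ∧ closure (f '' T) = K.map f := by
    obtain ⟨T, hT, hTfin⟩ := (fg_iff _).mp hmap
    refine (Set.exists_subset_image_finite_and (p := fun T => closure T = K.map f)).mp
      ⟨T, ?_, hTfin, hT⟩
    rw [← coe_map, ← hT]
    exact subset_closure
  obtain ⟨L, hL, hLfin⟩ := (fg_iff _).mp hker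
  refine (fg_iff _).mpr ⟨T ∪ L, le_antisymm ?_ fun k hk => ?_, hTfin.union hLfin⟩
  · refine closure_le _ |>.mpr <| Set.union_subset hTK fun l hl => ?_
    exact (hL ▸ subset_closure hl : l ∈ K ⊓ f.ker).1
  · obtain ⟨t, ht, hft⟩ : f k ∈ (closure T).map f := by
      rw [MonoidHom.map_closure, hT]; exact mem_map_of_mem f hk
    have htk : t⁻¹ * k ∈ K ⊓ f.ker :=
      mem_inf.mpr ⟨mul_mem (inv_mem ((closure_le K).mpr hTK ht)) hk, by simp [hft]⟩
    rw [← hL] at htk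
    simpa using mul_mem (closure_mono Set.subset_union_left ht)
      (closure_mono Set.subset_union_right htk)

theorem Subgroup.fg_of_lowerCentralSeries_eq_bot :
    ∀ {c : ℕ} {G : Type*} [Group G] [Group.FG G], (⊤ : Subgroup G).lowerCentralSeries c = ⊥ →
      ∀ K : Subgroup G, K.FG
  | 0, G, _, _, hG, K => by
    rw [Subgroup.lowerCentralSeries_zero] at hG
    rw [eq_bot_iff.mpr (hG ▸ le_top : K ≤ ⊥)]
    exact FG.bot
  | c + 1, G, _, _, hG, K => by
    set A := (⊤ : Subgroup G).lowerCentralSeries c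
    have hAc : A ≤ center G := commutator_top_right_eq_bot_iff_le_center.mp hG
    have hAfg : A.FG := (isFinitelyNormallyGenerated_lowerCentralSeries c).fg_of_le_center hAc
    have : Group.FG (G ⧸ A) := Group.fg_of_surjective (QuotientGroup.mk'_surjective A)
    refine FG.of_map_of_inf_ker (f := QuotientGroup.mk' A) ?_ ?_
    · exact fg_of_lowerCentralSeries_eq_bot
        ((lowerCentralSeries_quotient_eq_bot_iff A c).mpr le_rfl) _
    · rw [QuotientGroup.ker_mk']
      exact hAfg.of_le_of_le_center hAc inf_le_right

theorem Subgroup.isFinitelyNormallyGenerated_of_lowerCentralSeries_le [Group.FG G] {c : ℕ}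
    {R : Subgroup G} [R.Normal] (hR : (⊤ : Subgroup G).lowerCentralSeries c ≤ R) :
    R.IsFinitelyNormallyGenerated := by
  set q := QuotientGroup.mk' ((⊤ : Subgroup G).lowerCentralSeries c)
  have hq : Function.Surjective q := QuotientGroup.mk'_surjective _
  have : Group.FG (G ⧸ (⊤ : Subgroup G).lowerCentralSeries c) := Group.fg_of_surjective hq
  have : (R.map q).Normal := Normal.map ‹_› q hq
  have : Group.FG (R.map q) := (Group.fg_iff_subgroup_fg _).mpr <|
    fg_of_lowerCentralSeries_eq_bot ((lowerCentralSeries_quotient_eq_bot_iff _ c).mpr le_rfl) _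
  have hker : q.ker.IsFinitelyNormallyGenerated := by
    rw [QuotientGroup.ker_mk']
    exact isFinitelyNormallyGenerated_lowerCentralSeries c
  have := (IsFinitelyNormallyGenerated.of_FG (R.map q)).comap hq hker
  rwa [comap_map_eq, QuotientGroup.ker_mk', sup_eq_left.mpr hR] at this

theorem IsFinitelyPresented.of_group_isFinitelyPresented (G : Type*) [Group G]
    [Group.IsFinitelyPresented G] : IsFinitelyPresented G := by
  obtain ⟨m, s, hs, ⟨e⟩⟩ := Group.IsFinitelyPresented.exists_mulEquiv_presentedGroup (G := G)
  exact ⟨m, hs.toFinset, ⟨e.trans (QuotientGroup.quotientMulEquivOfEq (by simp))⟩⟩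

theorem commutesWithConjugates_mk_milnorRelators {n : ℕ} (x : Fin n → G) (i : Fin n) :
    CommutesWithConjugates (QuotientGroup.mk (x i) : G ⧸ milnorRelators x) := by
  intro g
  obtain ⟨y, rfl⟩ := QuotientGroup.mk_surjective g
  have h := (QuotientGroup.eq_one_iff (N := milnorRelators x) _).mpr
    (subset_normalClosure ⟨i, y, rfl⟩)
  -- the relator `a⁻¹ b⁻¹ a b` is Mathlib's `⁅a⁻¹, b⁻¹⁆`, as `⁅a, b⁆ = a * b * a⁻¹ * b⁻¹`
  rw [← Commute.inv_inv_iff, ← commutatorElement_eq_one_iff_commute, commutatorElement_def,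
    inv_inv, inv_inv]
  simpa only [QuotientGroup.mk_mul, QuotientGroup.mk_inv] using h

end

/-- The free Milnor group `MFₙ`, the quotient of the free group on `n` generators by
the normal closure of all `[xᵢ, xᵢ^y]`, is finitely presented and nilpotent of class
at most `n` (its `(n+1)`-st lower central series term is trivial). -/
theorem freeMilnorGroup_fp_nilpotent (n : ℕ) :
    IsFinitelyPresented
      (FreeGroup (Fin n) ⧸ milnorRelators (FreeGroup.of : Fin n → FreeGroup (Fin n))) ∧
    Subgroup.lowerCentralSeries
      (⊤ : Subgroup (FreeGroup (Fin n) ⧸ milnorRelators (FreeGroup.of : Fin n → FreeGroup (Fin n))))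
      n = ⊥ := by
  set R := milnorRelators (FreeGroup.of : Fin n → FreeGroup (Fin n))
  have hnil : (⊤ : Subgroup (FreeGroup (Fin n) ⧸ R)).lowerCentralSeries n = ⊥ :=
    lowerCentralSeries_eq_bot_of_commutesWithConjugates _
      (closure_range_comp_eq_top (FreeGroup.closure_range_of _) (QuotientGroup.mk'_surjective R))
      (commutesWithConjugates_mk_milnorRelators _)
  refine ⟨?_, hnil⟩
  have : Group.IsFinitelyPresented (FreeGroup (Fin n) ⧸ R) :=
    .quotient R (isFinitelyNormallyGenerated_of_lowerCentralSeries_le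
      ((lowerCentralSeries_quotient_eq_bot_iff R n).mp hnil))
  exact .of_group_isFinitelyPresented _
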